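/- Let G ∈ ℝ^{m×n} be a random matrix and R ∈ ℝ^{n×n}. Then tr((R ⊗ Iₘ)ᵀ E[vec(G) vec(G)ᵀ]) = tr((Iₘ ⊗ R)ᵀ E[vec(Gᵀ) vec(Gᵀ)ᵀ]); consequently minimizing ‖R ⊗ Iₘ − E[vec(G)vec(G)ᵀ]‖_F over R is equivalent to minimizing ‖Iₘ ⊗ R − E[vec(Gᵀ)vec(Gᵀ)ᵀ]‖_F, with minimizer R* = (1/m) E[GᵀG] over SPD matrices R. -/

import Mathlib

open Matrix Kronecker

/-- Squared Frobenius norm of a real matrix. -/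
noncomputable def sqFrob {α β : Type*} [Fintype α] [Fintype β] (M : Matrix α β ℝ) : ℝ :=
  ∑ i, ∑ j, M i j ^ 2

lemma mean_min (m : ℕ) (x : Fin m → ℝ) (r : ℝ) :
    ∑ a, ((m : ℝ)⁻¹ * ∑ b, x b - x a) ^ 2 ≤ ∑ a, (r - x a) ^ 2 := by
  rcases Nat.eq_zero_or_pos m with h | h
  · subst h; simp
  · have hm : (m : ℝ) ≠ 0 := by positivity
    set c : ℝ := (m : ℝ)⁻¹ * ∑ b, x b with hc
    have hS : ∑ b, x b = (m : ℝ) * c := by rw [hc, ← mul_assoc, mul_inv_cancel₀ hm, one_mul]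
    have key : ∑ a, (r - x a) ^ 2 - ∑ a, (c - x a) ^ 2 = (m : ℝ) * (r - c) ^ 2 := by
      rw [← Finset.sum_sub_distrib]
      have : ∀ a : Fin m, (r - x a) ^ 2 - (c - x a) ^ 2
          = ((r - c) * (r + c) - 2 * (r - c) * x a) := by intro a; ring
      simp_rw [this, Finset.sum_sub_distrib, Finset.sum_const, ← Finset.mul_sum,
        Finset.card_univ, Fintype.card_fin, nsmul_eq_mul, hS]
      ring
    nlinarith [sq_nonneg (r - c), h.le]

lemma expand_diff {m n : ℕ} (F : Matrix (Fin n × Fin m) (Fin n × Fin m) ℝ)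
    (S T : Matrix (Fin n) (Fin n) ℝ) :
    sqFrob (S ⊗ₖ (1 : Matrix (Fin m) (Fin m) ℝ) - F) -
      sqFrob (T ⊗ₖ (1 : Matrix (Fin m) (Fin m) ℝ) - F) =
    ∑ i, ∑ j, ∑ a, ((S i j - F (i,a) (j,a)) ^ 2 - (T i j - F (i,a) (j,a)) ^ 2) := by
  unfold sqFrob
  simp only [Fintype.sum_prod_type, Matrix.sub_apply, Matrix.kroneckerMap_apply,
    Matrix.one_apply, mul_ite, mul_one, mul_zero]
  rw [← Finset.sum_sub_distrib]
  refine Finset.sum_congr rfl fun i _ => ?_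
  rw [← Finset.sum_sub_distrib, Finset.sum_comm]
  refine Finset.sum_congr rfl fun j _ => ?_
  rw [← Finset.sum_sub_distrib]
  refine Finset.sum_congr rfl fun a _ => ?_
  rw [← Finset.sum_sub_distrib, Finset.sum_eq_single j]
  · simp
  · intro b _ hb; simp [show ¬ j = b from fun h => hb (Eq.symm h)]
  · simp

/-- `tr((R ⊗ Iₘ)ᵀ E[vec(G)vec(G)ᵀ]) = tr((Iₘ ⊗ R)ᵀ E[vec(Gᵀ)vec(Gᵀ)ᵀ])`;
the two Frobenius minimization objectives agree, and the minimizer over SPD matrices is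
`R* = (1/m) E[Gᵀ G]`. -/
theorem stmt9 {m n : ℕ} {ι : Type*} [Fintype ι]
    (w : ι → ℝ) (hw : ∀ k, 0 ≤ w k) (hw1 : ∑ k, w k = 1)
    (G : ι → Matrix (Fin m) (Fin n) ℝ)
    -- F = E[vec(G) vec(G)ᵀ], column-stacking vec of G, indices (column, row)
    (F : Matrix (Fin n × Fin m) (Fin n × Fin m) ℝ)
    (hF : F = Matrix.of fun p q => ∑ k, w k * (G k p.2 p.1 * G k q.2 q.1))
    -- F' = E[vec(Gᵀ) vec(Gᵀ)ᵀ], column-stacking vec of Gᵀ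
    (F' : Matrix (Fin m × Fin n) (Fin m × Fin n) ℝ)
    (hF' : F' = Matrix.of fun p q => ∑ k, w k * (G k p.1 p.2 * G k q.1 q.2))
    -- Rstar = (1/m) E[Gᵀ G]
    (Rstar : Matrix (Fin n) (Fin n) ℝ)
    (hRstar : Rstar = (m : ℝ)⁻¹ • Matrix.of fun i j => ∑ k, w k * ∑ a, G k a i * G k a j) :
    (∀ R : Matrix (Fin n) (Fin n) ℝ,
      Matrix.trace ((R ⊗ₖ (1 : Matrix (Fin m) (Fin m) ℝ))ᵀ * F) =
        Matrix.trace (((1 : Matrix (Fin m) (Fin m) ℝ) ⊗ₖ R)ᵀ * F')) ∧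
    (∀ R : Matrix (Fin n) (Fin n) ℝ,
      sqFrob (R ⊗ₖ (1 : Matrix (Fin m) (Fin m) ℝ) - F) =
        sqFrob ((1 : Matrix (Fin m) (Fin m) ℝ) ⊗ₖ R - F')) ∧
    (∀ R : Matrix (Fin n) (Fin n) ℝ, R.PosDef →
      sqFrob (Rstar ⊗ₖ (1 : Matrix (Fin m) (Fin m) ℝ) - F) ≤
        sqFrob (R ⊗ₖ (1 : Matrix (Fin m) (Fin m) ℝ) - F)) := by
  have hent : ∀ (R : Matrix (Fin n) (Fin n) ℝ) (q p : Fin n × Fin m),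
      (R ⊗ₖ (1 : Matrix (Fin m) (Fin m) ℝ)) q p =
      ((1 : Matrix (Fin m) (Fin m) ℝ) ⊗ₖ R) q.swap p.swap := by
    intro R q p
    simp only [Matrix.kroneckerMap_apply]
    rw [mul_comm]
    rfl
  have hFent : ∀ q p : Fin n × Fin m, F q p = F' q.swap p.swap := by
    intro q p; simp [hF, hF']
  refine ⟨?_, ?_, ?_⟩
  · intro R
    simp only [Matrix.trace, Matrix.diag, Matrix.mul_apply, Matrix.transpose_apply]
    refine Fintype.sum_equiv (Equiv.prodComm (Fin n) (Fin m)) _ _ fun p => ?_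
    refine Fintype.sum_equiv (Equiv.prodComm (Fin n) (Fin m)) _ _ fun q => ?_
    rw [hent R q p, hFent q p]; rfl
  · intro R
    unfold sqFrob
    refine Fintype.sum_equiv (Equiv.prodComm (Fin n) (Fin m)) _ _ fun p => ?_
    refine Fintype.sum_equiv (Equiv.prodComm (Fin n) (Fin m)) _ _ fun q => ?_
    rw [Matrix.sub_apply, Matrix.sub_apply, hent R p q, hFent p q]; rfl
  · intro R _
    have h := expand_diff F R Rstar
    have hmean : ∀ i j : Fin n,
        Rstar i j = (m : ℝ)⁻¹ * ∑ a, F (i, a) (j, a) := by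
      intro i j
      simp only [hRstar, hF, Matrix.smul_apply, Matrix.of_apply, smul_eq_mul]
      congr 1
      rw [Finset.sum_comm]
      exact Finset.sum_congr rfl fun k _ => Finset.mul_sum _ _ _
    have hnn : 0 ≤ ∑ i, ∑ j, ∑ a,
        ((R i j - F (i,a) (j,a)) ^ 2 - (Rstar i j - F (i,a) (j,a)) ^ 2) := by
      refine Finset.sum_nonneg fun i _ => Finset.sum_nonneg fun j _ => ?_
      rw [Finset.sum_sub_distrib, sub_nonneg, hmean i j]
      exact mean_min m (fun a => F (i, a) (j, a)) (R i j)
    linarith [h ▸ hnn]
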